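/- The map e : ℝⁿ → K defined by e(x) = q(ι(⌊x⌋), {x}) is a topological embedding of ℝⁿ into K with dense image; thus K is a compactification of ℝⁿ. -/
import Mathlib


open Set

noncomputable section

/-- `A₀(i)`: the set of coordinates where `i` equals `1`. -/
def Aset (n : ℕ) (i : Fin n → unitInterval) : Set (Fin n) := {k | (i k : ℝ) = 1}

/-- `B₀(i)`: the set of coordinates where `i` equals `0`. -/
def Bset (n : ℕ) (i : Fin n → unitInterval) : Set (Fin n) := {k | (i k : ℝ) = 0}

open Classical in
/-- `ψ_A(i)`: replace `i k` by `1 - i k` for every `k ∈ A`. -/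
def psiFlip (n : ℕ) (A : Set (Fin n)) (i : Fin n → unitInterval) : Fin n → unitInterval :=
  fun k => if k ∈ A then unitInterval.symm (i k) else i k

open Classical in
/-- `1_S`: the indicator vector of `S` in `ℤⁿ`. -/
def indVec (n : ℕ) (S : Set (Fin n)) : Fin n → ℤ := fun k => if k ∈ S then 1 else 0
/-- `h_N`: the Stone–Čech extension of translation by `N` on `ℤⁿ`. -/
def hshift (n : ℕ) (N : Fin n → ℤ) : StoneCech (Fin n → ℤ) → StoneCech (Fin n → ℤ) :=
  stoneCechExtend (g := fun z : Fin n → ℤ => stoneCechUnit (z + N))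
    (continuous_stoneCechUnit.comp continuous_of_discreteTopology)

/-- The relation `h` on `βℤⁿ × Iⁿ`. -/
def hrel (n : ℕ) (x y : StoneCech (Fin n → ℤ) × (Fin n → unitInterval)) : Prop :=
  ∃ A B : Set (Fin n), A ⊆ Aset n x.2 ∧ B ⊆ Bset n x.2 ∧
    y.1 = hshift n (indVec n A - indVec n B) x.1 ∧ y.2 = psiFlip n (A ∪ B) x.2

/-- `K = (βℤⁿ × Iⁿ)/h`, with the quotient topology. -/
abbrev Kspace (n : ℕ) := Quot (hrel n)

/-- The quotient map `q : βℤⁿ × Iⁿ → K`. -/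
abbrev qmap (n : ℕ) : StoneCech (Fin n → ℤ) × (Fin n → unitInterval) → Kspace n :=
  Quot.mk (hrel n)
/-- Coordinatewise floor `⌊x⌋ ∈ ℤⁿ`. -/
def floorVec (n : ℕ) (x : Fin n → ℝ) : Fin n → ℤ := fun k => ⌊x k⌋

/-- Coordinatewise fractional part `{x} ∈ [0,1)ⁿ ⊆ Iⁿ`. -/
def fracVec (n : ℕ) (x : Fin n → ℝ) : Fin n → unitInterval :=
  fun k => ⟨Int.fract (x k), ⟨Int.fract_nonneg _, (Int.fract_lt_one _).le⟩⟩

/-- The map `e : ℝⁿ → K`, `e x = q(ι ⌊x⌋, {x})`. -/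
def embMap (n : ℕ) (x : Fin n → ℝ) : Kspace n :=
  qmap n (stoneCechUnit (floorVec n x), fracVec n x)

lemma hshift_unit (n : ℕ) (N z : Fin n → ℤ) :
    hshift n N (stoneCechUnit z) = stoneCechUnit (z + N) :=
  congrFun (stoneCechExtend_extends _) z
def cext (n : ℕ) (k : Fin n) : StoneCech (Fin n → ℤ) → EReal :=
  stoneCechExtend (g := fun z : Fin n → ℤ => (((z k : ℤ) : ℝ) : EReal))
    continuous_of_discreteTopology
lemma cext_cont (n : ℕ) (k : Fin n) : Continuous (cext n k) :=
  continuous_stoneCechExtend _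
lemma cext_unit (n : ℕ) (k : Fin n) (z : Fin n → ℤ) :
    cext n k (stoneCechUnit z) = (((z k : ℤ) : ℝ) : EReal) :=
  congrFun (stoneCechExtend_extends _) z
lemma EReal.continuous_add_coe_right {X : Type*} [TopologicalSpace X]
    {f : X → EReal} {g : X → ℝ} (hf : Continuous f) (hg : Continuous g) :
    Continuous fun x => f x + ((g x : ℝ) : EReal) := by
  rw [continuous_iff_continuousAt]
  intro x
  have h : ContinuousAt (fun p : EReal × EReal => p.1 + p.2) (f x, (g x : EReal)) :=
    EReal.continuousAt_add (by simp) (by simp)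
  exact ContinuousAt.comp h (ContinuousAt.prodMk hf.continuousAt
    ((continuous_coe_real_ereal.comp hg).continuousAt)) (x := x)
lemma cext_shift (n : ℕ) (k : Fin n) (N : Fin n → ℤ) (p : StoneCech (Fin n → ℤ)) :
    cext n k (hshift n N p) = cext n k p + ((N k : ℝ) : EReal) := by
  have h : (fun q => cext n k (hshift n N q))
      = (fun q : StoneCech (Fin n → ℤ) => cext n k q + ((N k : ℝ) : EReal)) := by
    apply DenseRange.equalizer (denseRange_stoneCechUnit (α := Fin n → ℤ))
    · exact (cext_cont n k).comp (continuous_stoneCechExtend _)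
    · exact EReal.continuous_add_coe_right (cext_cont n k) continuous_const
    · funext z
      simp only [Function.comp_apply]
      rw [hshift_unit, cext_unit, cext_unit, Pi.add_apply]
      push_cast
      rfl
  exact congrFun h p

/-- The separating map `φ : βℤⁿ × Iⁿ → ERealⁿ`. -/
def phi (n : ℕ) (w : StoneCech (Fin n → ℤ) × (Fin n → unitInterval)) : Fin n → EReal :=
  fun k => cext n k w.1 + (((w.2 k : ℝ) : ℝ) : EReal)

lemma phi_cont (n : ℕ) : Continuous (phi n) := by
  apply continuous_pi
  intro k
  exact EReal.continuous_add_coe_right (g := fun w : StoneCech (Fin n → ℤ) × (Fin n → unitInterval) => ((w.2 k : ℝ) : ℝ)) ((cext_cont n k).comp continuous_fst)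
    (continuous_subtype_val.comp ((continuous_apply k).comp continuous_snd))

lemma phi_invariant (n : ℕ) {w w' : StoneCech (Fin n → ℤ) × (Fin n → unitInterval)}
    (h : hrel n w w') : phi n w' = phi n w := by
  obtain ⟨A, B, hA, hB, h1, h2⟩ := h
  funext k
  simp only [phi, h1, h2, cext_shift, add_assoc]
  congr 1
  rw [← EReal.coe_add]
  congr 1
  have hAB : ((indVec n A - indVec n B) k : ℝ) = (indVec n A k : ℝ) - (indVec n B k : ℝ) := by
    push_cast [Pi.sub_apply]; ring
  rw [hAB]
  by_cases hkA : k ∈ A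
  · have hi : (w.2 k : ℝ) = 1 := hA hkA
    have hkB : k ∉ B := fun hkB => by
      have h0 : (w.2 k : ℝ) = 0 := hB hkB
      rw [hi] at h0; norm_num at h0
    simp only [indVec, psiFlip, if_pos hkA, if_neg hkB, if_pos (Set.mem_union_left _ hkA),
      unitInterval.coe_symm_eq, hi]
    norm_num
  · by_cases hkB : k ∈ B
    · have hi : (w.2 k : ℝ) = 0 := hB hkB
      simp only [indVec, psiFlip, if_neg hkA, if_pos hkB, if_pos (Set.mem_union_right _ hkB),
        unitInterval.coe_symm_eq, hi]
      norm_num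
    · have : k ∉ A ∪ B := fun hk => hk.elim hkA hkB
      simp only [indVec, psiFlip, if_neg hkA, if_neg hkB, if_neg this]
      norm_num

def phibar (n : ℕ) : Kspace n → (Fin n → EReal) :=
  Quot.lift (phi n) (fun _ _ h => (phi_invariant n h).symm)

lemma phibar_cont (n : ℕ) : Continuous (phibar n) :=
  continuous_quot_lift _ (phi_cont n)

lemma phibar_comp (n : ℕ) :
    (phibar n) ∘ (embMap n) = fun (x : Fin n → ℝ) (k : Fin n) => ((x k : ℝ) : EReal) := by
  funext x k
  show phi n (stoneCechUnit (floorVec n x), fracVec n x) k = _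
  simp only [phi, cext_unit, fracVec, floorVec]
  rw [← EReal.coe_add]
  congr 1
  exact Int.floor_add_fract (x k)

lemma coem_embedding (n : ℕ) :
    Topology.IsEmbedding (fun (x : Fin n → ℝ) (k : Fin n) => ((x k : ℝ) : EReal)) := by
  refine ⟨⟨?_⟩, ?_⟩
  · show (Pi.topologicalSpace : TopologicalSpace (Fin n → ℝ)) = _
    rw [Pi.topologicalSpace, Pi.topologicalSpace, induced_iInf]
    refine iInf_congr fun k => ?_
    rw [induced_compose]
    have hc : ((fun f : Fin n → EReal => f k) ∘ (fun (x : Fin n → ℝ) (j : Fin n) => ((x j : ℝ) : EReal)))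
        = (fun r : ℝ => (r : EReal)) ∘ (fun x : Fin n → ℝ => x k) := rfl
    rw [hc, ← induced_compose (f := fun x : Fin n → ℝ => x k) (g := fun r : ℝ => (r : EReal)),
      ← EReal.isEmbedding_coe.eq_induced]
  · intro x y hxy
    funext k
    exact EReal.coe_eq_coe_iff.mp (congrFun hxy k)

lemma embMap_hits (n : ℕ) (m : Fin n → ℤ) (i : Fin n → unitInterval) :
    ∃ x : Fin n → ℝ, embMap n x = qmap n (stoneCechUnit m, i) := by
  classical
  set A : Set (Fin n) := Aset n i with hA
  set t : Fin n → unitInterval := psiFlip n A i with ht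
  have ht0 : ∀ k, 0 ≤ (t k : ℝ) := fun k => (t k).2.1
  have ht1 : ∀ k, (t k : ℝ) < 1 := by
    intro k
    by_cases hk : k ∈ A
    · have : (i k : ℝ) = 1 := hk
      simp only [ht, psiFlip, if_pos hk, unitInterval.coe_symm_eq, this]
      norm_num
    · have hne : (i k : ℝ) ≠ 1 := hk
      have hle : (i k : ℝ) ≤ 1 := (i k).2.2
      simp only [ht, psiFlip, if_neg hk]
      exact lt_of_le_of_ne hle hne
  refine ⟨fun k => ((m k + indVec n A k : ℤ) : ℝ) + (t k : ℝ), ?_⟩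
  have hfloor : floorVec n (fun k => ((m k + indVec n A k : ℤ) : ℝ) + (t k : ℝ))
      = fun k => m k + indVec n A k := by
    funext k
    show ⌊_⌋ = _
    rw [Int.floor_intCast_add]
    simp [Int.floor_eq_zero_iff, Set.mem_Ico, ht0 k, ht1 k]
  have hfrac : fracVec n (fun k => ((m k + indVec n A k : ℤ) : ℝ) + (t k : ℝ)) = t := by
    funext k
    apply Subtype.ext
    show Int.fract _ = (t k : ℝ)
    rw [Int.fract_intCast_add, Int.fract_eq_self.mpr ⟨ht0 k, ht1 k⟩]
  rw [embMap, hfloor, hfrac]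
  refine (Quot.sound ?_).symm
  refine ⟨A, ∅, le_refl _, Set.empty_subset _, ?_, ?_⟩
  · show stoneCechUnit (fun k => m k + indVec n A k) = hshift n _ (stoneCechUnit m)
    rw [hshift_unit]
    exact congrArg stoneCechUnit (funext fun k => by simp [indVec])
  · rw [Set.union_empty]

lemma embMap_dense (n : ℕ) : DenseRange (embMap n) := by
  have h1 : DenseRange (fun w : (Fin n → ℤ) × (Fin n → unitInterval) =>
      qmap n (stoneCechUnit w.1, w.2)) := by
    have heq : (fun w : (Fin n → ℤ) × (Fin n → unitInterval) =>
        qmap n (stoneCechUnit w.1, w.2)) = (qmap n) ∘ (Prod.map stoneCechUnit id) := rfl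
    rw [heq]
    exact DenseRange.comp (Quot.mk_surjective.denseRange)
      (denseRange_stoneCechUnit.prodMap denseRange_id) continuous_quot_mk
  have hsub : Set.range (fun w : (Fin n → ℤ) × (Fin n → unitInterval) =>
      qmap n (stoneCechUnit w.1, w.2)) ⊆ Set.range (embMap n) := by
    rintro _ ⟨⟨m, i⟩, rfl⟩
    obtain ⟨x, hx⟩ := embMap_hits n m i
    exact ⟨x, hx⟩
  exact h1.mono hsub

lemma embMap_cont (n : ℕ) (hn : 1 ≤ n) : Continuous (embMap n) := by
  classical
  rw [continuous_iff_continuousAt]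
  intro x
  rw [ContinuousAt, Filter.tendsto_def]
  intro W hW
  obtain ⟨W', hW'sub, hW'open, hxW'⟩ := mem_nhds_iff.mp hW
  set O : Set (StoneCech (Fin n → ℤ) × (Fin n → unitInterval)) := qmap n ⁻¹' W' with hOdef
  have hOopen : IsOpen O := hW'open.preimage continuous_quot_mk
  set m0 : Fin n → ℤ := floorVec n x with hm0
  -- saturation: shifted points are in O
  have hPS : ∀ S : Finset (Fin n), (∀ k ∈ S, Int.fract (x k) = 0) →
      (stoneCechUnit (m0 - indVec n ↑S), psiFlip n ↑S (fracVec n x)) ∈ O := by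
    intro S hS
    have key : qmap n (stoneCechUnit (m0 - indVec n ↑S), psiFlip n ↑S (fracVec n x))
        = embMap n x := by
      refine (Quot.sound ?_).symm
      refine ⟨∅, ↑S, Set.empty_subset _, ?_, ?_, ?_⟩
      · intro k hk
        show (fracVec n x k : ℝ) = 0
        exact hS k hk
      · show stoneCechUnit (m0 - indVec n ↑S) = hshift n _ (stoneCechUnit m0)
        rw [hshift_unit]
        refine congrArg stoneCechUnit (funext fun k => ?_)
        simp only [Pi.sub_apply, Pi.add_apply, indVec, Set.mem_empty_iff_false, if_false]
        ring
      · rw [Set.empty_union]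
    show qmap n _ ∈ W'
    rw [key]
    exact hxW'
  -- choose epsilons for each S
  have hEps : ∀ S : Finset (Fin n), ∃ ε : ℝ, 0 < ε ∧
      ((∀ k ∈ S, Int.fract (x k) = 0) → ∀ j : Fin n → unitInterval,
        dist j (psiFlip n ↑S (fracVec n x)) < ε →
        (stoneCechUnit (m0 - indVec n ↑S), j) ∈ O) := by
    intro S
    by_cases hS : ∀ k ∈ S, Int.fract (x k) = 0
    · have hmemO := hPS S hS
      have hnh : O ∈ nhds ((stoneCechUnit (m0 - indVec n ↑S), psiFlip n ↑S (fracVec n x))) :=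
        hOopen.mem_nhds hmemO
      rw [mem_nhds_prod_iff] at hnh
      obtain ⟨U, hU, V, hV, hUV⟩ := hnh
      obtain ⟨ε, hε, hball⟩ := Metric.mem_nhds_iff.mp hV
      exact ⟨ε, hε, fun _ j hj => hUV ⟨mem_of_mem_nhds hU, hball (Metric.mem_ball.mpr hj)⟩⟩
    · exact ⟨1, one_pos, fun h => absurd h hS⟩
  choose eps hepspos heps using hEps
  -- build delta
  have hne : ((Finset.univ : Finset (Finset (Fin n)))).Nonempty := ⟨∅, Finset.mem_univ _⟩
  set δ1 : ℝ := (Finset.univ : Finset (Finset (Fin n))).inf' hne eps with hδ1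
  have hδ1pos : 0 < δ1 := by
    rw [hδ1, Finset.lt_inf'_iff]
    exact fun S _ => hepspos S
  have hδ1le : ∀ S : Finset (Fin n), δ1 ≤ eps S :=
    fun S => Finset.inf'_le _ (Finset.mem_univ S)
  set g : Fin n → ℝ := fun k => if Int.fract (x k) = 0 then 1
    else min (Int.fract (x k)) (1 - Int.fract (x k)) with hg
  have hgpos : ∀ k, 0 < g k := by
    intro k
    rw [hg]
    by_cases h : Int.fract (x k) = 0
    · simp [h]
    · have h1 : 0 < Int.fract (x k) := lt_of_le_of_ne (Int.fract_nonneg _) (Ne.symm h)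
      have h2 : Int.fract (x k) < 1 := Int.fract_lt_one _
      simp only [if_neg h]
      exact lt_min h1 (by linarith)
  have hnefin : ((Finset.univ : Finset (Fin n))).Nonempty := ⟨⟨0, hn⟩, Finset.mem_univ _⟩
  set δ2 : ℝ := (Finset.univ : Finset (Fin n)).inf' hnefin g with hδ2
  have hδ2pos : 0 < δ2 := by
    rw [hδ2, Finset.lt_inf'_iff]
    exact fun k _ => hgpos k
  have hδ2le : ∀ k, δ2 ≤ g k := fun k => Finset.inf'_le _ (Finset.mem_univ k)
  set δ : ℝ := min δ1 (min 1 δ2) with hδ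
  have hδpos : 0 < δ := lt_min hδ1pos (lt_min one_pos hδ2pos)
  -- conclude
  refine Filter.mem_of_superset (Metric.ball_mem_nhds x hδpos) ?_
  intro y hy
  rw [Metric.mem_ball] at hy
  have hyk : ∀ k, |y k - x k| < δ := by
    intro k
    have := ((dist_pi_lt_iff hδpos).mp hy) k
    rwa [Real.dist_eq] at this
  set S : Finset (Fin n) := Finset.univ.filter (fun k => ⌊y k⌋ ≠ ⌊x k⌋) with hSdef
  have hSZ : ∀ k ∈ S, Int.fract (x k) = 0 := by
    intro k hk
    by_contra hfr
    have hmem : ⌊y k⌋ ≠ ⌊x k⌋ := (Finset.mem_filter.mp hk).2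
    apply hmem
    have hb : |y k - x k| < g k := lt_of_lt_of_le (lt_of_lt_of_le (hyk k)
      (le_trans (min_le_right _ _) (min_le_right _ _))) (hδ2le k)
    replace hb : |y k - x k| < min (Int.fract (x k)) (1 - Int.fract (x k)) := by
      simpa [hg, if_neg hfr] using hb
    have h1 : (⌊x k⌋ : ℝ) ≤ y k := by
      have : x k - Int.fract (x k) = (⌊x k⌋ : ℝ) := by
        rw [Int.fract]; ring
      have hlow : x k - Int.fract (x k) ≤ y k := by
        have := abs_lt.mp hb
        linarith [this.1, min_le_left (Int.fract (x k)) (1 - Int.fract (x k))]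
      linarith [hlow, this.le, this.ge]
    have h2 : y k < (⌊x k⌋ : ℝ) + 1 := by
      have hfl : (⌊x k⌋ : ℝ) = x k - Int.fract (x k) := by
        rw [Int.fract]; ring
      have := abs_lt.mp hb
      have := min_le_right (Int.fract (x k)) (1 - Int.fract (x k))
      linarith
    exact Int.floor_eq_iff.mpr ⟨h1, h2⟩
  have hδle1 : δ ≤ 1 := le_trans (min_le_right _ _) (min_le_left _ _)
  have hfloor : ∀ k, ⌊y k⌋ = m0 k - indVec n (↑S) k := by
    intro k
    by_cases hk : k ∈ S
    · have hfr : Int.fract (x k) = 0 := hSZ k hk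
      have hxk : x k = (⌊x k⌋ : ℝ) := by
        have : Int.fract (x k) = x k - ⌊x k⌋ := rfl
        linarith [this ▸ hfr]
      have hne' : ⌊y k⌋ ≠ ⌊x k⌋ := (Finset.mem_filter.mp hk).2
      have habs := abs_lt.mp (lt_of_lt_of_le (hyk k) hδle1)
      have hyx : y k < x k := by
        by_contra hge
        push_neg at hge
        apply hne'
        refine Int.floor_eq_iff.mpr ⟨by rw [← hxk]; exact hge, by linarith⟩
      have : ⌊y k⌋ = ⌊x k⌋ - 1 := by
        refine Int.floor_eq_iff.mpr ⟨?_, ?_⟩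
        · push_cast; linarith
        · push_cast; linarith
      rw [this, hm0]
      have hmem : k ∈ (↑S : Set (Fin n)) := hk
      have : indVec n (↑S) k = 1 := if_pos hmem
      rw [this]
      rfl
    · have hmem : k ∉ (↑S : Set (Fin n)) := hk
      have : indVec n (↑S) k = 0 := if_neg hmem
      rw [this, hm0]
      have hne' : ¬(⌊y k⌋ ≠ ⌊x k⌋) := fun h => hk (Finset.mem_filter.mpr ⟨Finset.mem_univ _, h⟩)
      push_neg at hne'
      rw [hne']
      simp [floorVec]
  have hfloorVec : floorVec n y = m0 - indVec n ↑S := funext fun k => hfloor k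
  have hδleδ1 : δ ≤ δ1 := min_le_left _ _
  have hdist : dist (fracVec n y) (psiFlip n ↑S (fracVec n x)) < eps S := by
    rw [dist_pi_lt_iff (hepspos S)]
    intro k
    rw [Subtype.dist_eq, Real.dist_eq]
    by_cases hk : k ∈ S
    · have hfr : Int.fract (x k) = 0 := hSZ k hk
      have hpsi : ((psiFlip n (↑S) (fracVec n x)) k : ℝ) = 1 := by
        have hmem : k ∈ (↑S : Set (Fin n)) := hk
        simp only [psiFlip, if_pos hmem, unitInterval.coe_symm_eq]
        show (1 : ℝ) - Int.fract (x k) = 1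
        rw [hfr]; ring
      have hfy : (fracVec n y k : ℝ) = y k - x k + 1 := by
        show Int.fract (y k) = y k - x k + 1
        rw [Int.fract]
        rw [hfloor k]
        have hxk : x k = (m0 k : ℝ) := by
          have h1 : Int.fract (x k) = x k - ⌊x k⌋ := rfl
          have : (m0 k : ℝ) = (⌊x k⌋ : ℝ) := by simp [hm0, floorVec]
          rw [this]
          linarith [h1 ▸ hfr]
        have hone : indVec n (↑S) k = 1 := if_pos (show k ∈ (↑S : Set (Fin n)) from hk)
        rw [hone]
        push_cast
        linarith
      rw [hfy, hpsi]
      have : |y k - x k + 1 - 1| = |y k - x k| := by ring_nf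
      rw [this]
      exact lt_of_lt_of_le (hyk k) (le_trans hδleδ1 (hδ1le S))
    · have hpsi : ((psiFlip n (↑S) (fracVec n x)) k : ℝ) = Int.fract (x k) := by
        have hmem : k ∉ (↑S : Set (Fin n)) := hk
        simp only [psiFlip, if_neg hmem]
        rfl
      have hfy : (fracVec n y k : ℝ) = y k - (⌊x k⌋ : ℝ) := by
        show Int.fract (y k) = y k - (⌊x k⌋ : ℝ)
        rw [Int.fract, hfloor k]
        have hzero : indVec n (↑S) k = 0 := if_neg (show k ∉ (↑S : Set (Fin n)) from hk)
        rw [hzero]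
        simp [hm0, floorVec]
      rw [hfy, hpsi]
      have : y k - (⌊x k⌋ : ℝ) - Int.fract (x k) = y k - x k := by
        rw [Int.fract]; ring
      rw [this]
      exact lt_of_lt_of_le (hyk k) (le_trans hδleδ1 (hδ1le S))
  have hfin := heps S hSZ (fracVec n y) hdist
  show embMap n y ∈ W
  apply hW'sub
  show qmap n _ ∈ W'
  rw [embMap, hfloorVec] at *
  exact hfin

theorem statement4 (n : ℕ) (hn : 1 ≤ n) :
    Topology.IsEmbedding (embMap n) ∧ DenseRange (embMap n) := by
  constructor
  · refine Topology.IsEmbedding.of_comp (embMap_cont n hn) (phibar_cont n) ?_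
    rw [show (phibar n) ∘ (embMap n) = _ from phibar_comp n]
    exact coem_embedding n
  · exact embMap_dense n
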